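/- (2-Yang–Baxter equation) Let (G, Δ, R) be a strict quasitriangular 2-bialgebra with invertible 2-R-matrix components Rˡ ∈ G₋₁⊗G₀, Rʳ ∈ G₀⊗G₋₁ satisfying the coproduct compatibility identities and the coproduct permutation identities. Then Rʳ₂₃·(Rʳ₁₃ ▷ Rˡ₁₂) = (Rˡ₁₂ ◁ Rʳ₁₃)·Rʳ₂₃ holds in G₀⊗G₋₁⊗G₋₁ (products and actions taken factorwise with the appropriate grading). -/

import Mathlib

open scoped TensorProduct

structure AssocTwoAlgebra (k : Type*) [CommRing k] (G₀ G₁ : Type*)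
    [NonUnitalRing G₀] [NonUnitalRing G₁] [Module k G₀] [Module k G₁] where
  t : G₁ →ₗ[k] G₀
  t_mul : ∀ y y' : G₁, t (y * y') = t y * t y'
  actL : G₀ →ₗ[k] G₁ →ₗ[k] G₁
  actR : G₁ →ₗ[k] G₀ →ₗ[k] G₁
  actL_mul : ∀ (x x' : G₀) (y : G₁), actL (x * x') y = actL x (actL x' y)
  actLR : ∀ (x : G₀) (y : G₁) (x' : G₀), actR (actL x y) x' = actL x (actR y x')
  actR_mul : ∀ (y : G₁) (x x' : G₀), actR y (x * x') = actR (actR y x) x'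
  equivL : ∀ (x : G₀) (y : G₁), t (actL x y) = x * t y
  equivR : ∀ (y : G₁) (x : G₀), t (actR y x) = t y * x
  peifferL : ∀ y y' : G₁, actL (t y) y' = y * y'
  peifferR : ∀ y y' : G₁, actR y (t y') = y * y'

noncomputable section

variable (k : Type*) [CommRing k]

section Legs

variable (G₀ G₁ : Type*) [Ring G₀] [Algebra k G₀] [Ring G₁] [Algebra k G₁]

/-- place an element of `G₁ ⊗ G₀` in legs 1,3 (unit of `G₀` in leg 2). -/
def legL13 : G₁ ⊗[k] G₀ →ₗ[k] G₁ ⊗[k] (G₀ ⊗[k] G₀) :=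
  TensorProduct.map LinearMap.id (TensorProduct.mk k G₀ G₀ 1)

/-- place an element of `G₁ ⊗ G₀` in legs 1,2 (unit of `G₀` in leg 3). -/
def legL12 : G₁ ⊗[k] G₀ →ₗ[k] G₁ ⊗[k] (G₀ ⊗[k] G₀) :=
  TensorProduct.map LinearMap.id ((TensorProduct.mk k G₀ G₀).flip 1)

/-- place an element of `G₁ ⊗ G₀` in legs 2,3 (unit of `G₀` in leg 1). -/
def legL23 : G₁ ⊗[k] G₀ →ₗ[k] G₀ ⊗[k] (G₁ ⊗[k] G₀) :=
  TensorProduct.mk k G₀ (G₁ ⊗[k] G₀) 1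

/-- place an element of `G₀ ⊗ G₁` in legs 1,3 (unit of `G₀` in leg 2). -/
def legR13 : G₀ ⊗[k] G₁ →ₗ[k] G₀ ⊗[k] (G₀ ⊗[k] G₁) :=
  TensorProduct.map LinearMap.id (TensorProduct.mk k G₀ G₁ 1)

/-- place an element of `G₀ ⊗ G₁` in legs 1,2 (unit of `G₀` in leg 3). -/
def legR12 : G₀ ⊗[k] G₁ →ₗ[k] G₀ ⊗[k] (G₁ ⊗[k] G₀) :=
  TensorProduct.map LinearMap.id ((TensorProduct.mk k G₁ G₀).flip 1)

/-- place an element of `G₀ ⊗ G₁` in legs 2,3 (unit of `G₀` in leg 1). -/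
def legR23 : G₀ ⊗[k] G₁ →ₗ[k] G₀ ⊗[k] (G₀ ⊗[k] G₁) :=
  TensorProduct.mk k G₀ (G₀ ⊗[k] G₁) 1

end Legs

/-! Both sides of the 2-Yang–Baxter equation are images of `Rˡ` under a coproduct:
`Rʳ₁₃ ▷ Rˡ₁₂ = (id ⊗ Δʳ) Rˡ`, and, after swapping legs 2 and 3 in the compatibility for `Δˡ`,
`Rˡ₁₂ ◁ Rʳ₁₃ = (id ⊗ σ∘Δˡ) Rˡ`. The equation thus becomes
`Rʳ₂₃ · (id ⊗ Δʳ) Rˡ = (id ⊗ σ∘Δˡ) Rˡ · Rʳ₂₃`, which is linear in `Rˡ`; on a pure tensor `y ⊗ x`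
it is `y` tensored with the permutation identity `Rʳ · Δʳ x = σ(Δˡ x) · Rʳ`, because the unit
of `G₀` acts trivially on `G₋₁` (a consequence of the Peiffer identities). -/

open TensorProduct

namespace AssocTwoAlgebra

section UnitAction

variable {k} {G₀ G₁ : Type*} [Ring G₀] [Ring G₁] [Module k G₀] [Module k G₁]
  (A : AssocTwoAlgebra k G₀ G₁)

theorem actL_one (y : G₁) : A.actL 1 y = y := by
  have h : A.actL (A.t 1) y = y := by simpa using A.peifferL 1 y
  calc A.actL 1 y = A.actL 1 (A.actL (A.t 1) y) := by rw [h]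
    _ = A.actL (A.t 1) y := by rw [← A.actL_mul, one_mul]
    _ = y := h

theorem actR_one (y : G₁) : A.actR y 1 = y := by
  have h : A.actR y (A.t 1) = y := by simpa using A.peifferR y 1
  calc A.actR y 1 = A.actR (A.actR y (A.t 1)) 1 := by rw [h]
    _ = A.actR y (A.t 1) := by rw [← A.actR_mul, mul_one]
    _ = y := h

end UnitAction

section LegIdentities

variable {k} {G₀ G₁ : Type*} [Ring G₀] [Algebra k G₀] [Ring G₁] [Algebra k G₁]
  (A : AssocTwoAlgebra k G₀ G₁)

/-- `(id ⊗ σ) (u₁₃ ◁ v₁₂) = u₁₂ ◁ v₁₃`. -/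
theorem map_comm_map₂_legL13_legR12 (u : G₁ ⊗[k] G₀) (v : G₀ ⊗[k] G₁) :
    map LinearMap.id (TensorProduct.comm k G₁ G₀).toLinearMap
        (map₂ A.actR (map₂ A.actL (LinearMap.mul k G₀)) (legL13 k G₀ G₁ u) (legR12 k G₀ G₁ v))
      = map₂ A.actR (map₂ (LinearMap.mul k G₀) A.actL) (legL12 k G₀ G₁ u)
          (legR13 k G₀ G₁ v) := by
  induction u using TensorProduct.induction_on with
  | zero => simp
  | add u₁ u₂ h₁ h₂ => simp only [map_add, LinearMap.add_apply, h₁, h₂]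
  | tmul y x =>
    induction v using TensorProduct.induction_on with
    | zero => simp
    | add v₁ v₂ h₁ h₂ => simp only [map_add, h₁, h₂]
    | tmul a b => simp [legL13, legL12, legR12, legR13]

/-- `Rʳ₂₃ · (id ⊗ Δʳ) u = (id ⊗ σ∘Δˡ) u · Rʳ₂₃`. -/
theorem legR23_map_coproduct_perm (Δl : G₀ →ₗ[k] G₁ ⊗[k] G₀) (Δr : G₀ →ₗ[k] G₀ ⊗[k] G₁)
    (Rr : G₀ ⊗[k] G₁)
    (hperm : ∀ x : G₀,
      map₂ (LinearMap.mul k G₀) (LinearMap.mul k G₁) Rr (Δr x)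
        = map₂ (LinearMap.mul k G₀) (LinearMap.mul k G₁)
            ((TensorProduct.comm k G₁ G₀) (Δl x)) Rr)
    (u : G₁ ⊗[k] G₀) :
    map₂ A.actL (map₂ (LinearMap.mul k G₀) (LinearMap.mul k G₁))
        (legR23 k G₀ G₁ Rr) (map LinearMap.id Δr u)
      = map₂ A.actR (map₂ (LinearMap.mul k G₀) (LinearMap.mul k G₁))
          (map LinearMap.id ((TensorProduct.comm k G₁ G₀).toLinearMap ∘ₗ Δl) u)
          (legR23 k G₀ G₁ Rr) := by
  induction u using TensorProduct.induction_on with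
  | zero => simp
  | add u₁ u₂ h₁ h₂ => simp only [map_add, LinearMap.add_apply, h₁, h₂]
  | tmul y x =>
    simp only [legR23, mk_apply, map_tmul, LinearMap.id_coe, id_eq, LinearMap.comp_apply,
      map₂_apply_tmul, A.actL_one, A.actR_one]
    exact congrArg (y ⊗ₜ[k] ·) (hperm x)

end LegIdentities

end AssocTwoAlgebra

theorem two_yang_baxter {G₀ G₁ : Type*} [Ring G₀] [Algebra k G₀] [Ring G₁] [Algebra k G₁]
    (A : AssocTwoAlgebra k G₀ G₁)
    (Δl : G₀ →ₗ[k] G₁ ⊗[k] G₀) (Δr : G₀ →ₗ[k] G₀ ⊗[k] G₁)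
    (Rl : G₁ ⊗[k] G₀) (Rr : G₀ ⊗[k] G₁)
    -- compatibility with the coproduct
    (h3 : TensorProduct.map LinearMap.id Δl Rl
          = TensorProduct.map₂ A.actR
              (TensorProduct.map₂ A.actL (LinearMap.mul k G₀))
              (legL13 k G₀ G₁ Rl) (legR12 k G₀ G₁ Rr))
    (h4 : TensorProduct.map LinearMap.id Δr Rl
          = TensorProduct.map₂ A.actL
              (TensorProduct.map₂ (LinearMap.mul k G₀) A.actR)
              (legR13 k G₀ G₁ Rr) (legL12 k G₀ G₁ Rl))
    -- coproduct permutation identities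
    (hperm1 : ∀ x : G₀,
      TensorProduct.map₂ (LinearMap.mul k G₀) (LinearMap.mul k G₁) Rr (Δr x)
        = TensorProduct.map₂ (LinearMap.mul k G₀) (LinearMap.mul k G₁)
            ((TensorProduct.comm k G₁ G₀) (Δl x)) Rr) :
    -- 2-Yang–Baxter equation: Rʳ₂₃·(Rʳ₁₃ ▷ Rˡ₁₂) = (Rˡ₁₂ ◁ Rʳ₁₃)·Rʳ₂₃
    TensorProduct.map₂ A.actL
        (TensorProduct.map₂ (LinearMap.mul k G₀) (LinearMap.mul k G₁))
        (legR23 k G₀ G₁ Rr)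
        (TensorProduct.map₂ A.actL
          (TensorProduct.map₂ (LinearMap.mul k G₀) A.actR)
          (legR13 k G₀ G₁ Rr) (legL12 k G₀ G₁ Rl))
      = TensorProduct.map₂ A.actR
          (TensorProduct.map₂ (LinearMap.mul k G₀) (LinearMap.mul k G₁))
          (TensorProduct.map₂ A.actR
            (TensorProduct.map₂ (LinearMap.mul k G₀) A.actL)
            (legL12 k G₀ G₁ Rl) (legR13 k G₀ G₁ Rr))
          (legR23 k G₀ G₁ Rr) := by
  have h3_swapped : map LinearMap.id ((TensorProduct.comm k G₁ G₀).toLinearMap ∘ₗ Δl) Rl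
      = map₂ A.actR (map₂ (LinearMap.mul k G₀) A.actL) (legL12 k G₀ G₁ Rl)
          (legR13 k G₀ G₁ Rr) := by
    rw [← A.map_comm_map₂_legL13_legR12, ← h3, ← LinearMap.comp_apply, ← map_comp,
      LinearMap.id_comp]
  rw [← h4, ← h3_swapped]
  exact A.legR23_map_coproduct_perm Δl Δr Rr hperm1 Rl

end
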